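/- Let n ≥ 3, 1 < α < √2, ᾱ = √(2-α²), and let b₁,…,bₙ be the columns of the generator matrix M_{Dₙ^α}. Then every nonzero integer combination x = Σ cᵢ bᵢ with ‖x‖² ≤ 2 satisfies x = ±bᵢ for some i. In particular the set of minimal vectors of Dₙ^α is {±b₁,…,±bₙ}, λ₁²(Dₙ^α) = 2, and Dₙ^α is generic well-rounded with kissing number 2n. -/

import Mathlib

/-- Generator matrix of the deformed checkerboard lattice `Dₙ^α` (0-indexed):
columns `b₁ = αe₁+ᾱe₂`, `b₂ = αe₂+ᾱe₃`, `b₃ = ᾱe₁+αe₃`, and for `j ≥ 4`,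
`bⱼ = ᾱe_{j-1} - αeⱼ`. -/
def DnAlphaMatrix (n : ℕ) (α ᾱ : ℝ) : Matrix (Fin n) (Fin n) ℝ :=
  fun i j =>
    if (j : ℕ) = 0 then (if (i : ℕ) = 0 then α else if (i : ℕ) = 1 then ᾱ else 0)
    else if (j : ℕ) = 1 then (if (i : ℕ) = 1 then α else if (i : ℕ) = 2 then ᾱ else 0)
    else if (j : ℕ) = 2 then (if (i : ℕ) = 0 then ᾱ else if (i : ℕ) = 2 then α else 0)
    else (if (i : ℕ) = (j : ℕ) then -α else if (i : ℕ) + 1 = (j : ℕ) then ᾱ else 0)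

/-!
Write `M_α` for `M_{Dₙ^α}` and `v = M_α c` with `c ∈ ℤⁿ`. Since `α² + ᾱ² = 2`,
`‖M_α c‖² = (2 - 2αᾱ) ‖c‖² + αᾱ ‖M₁ c‖² + 2ᾱ(ᾱ - α) c₂c₄`,
where `M₁` (the case `α = ᾱ = 1`) generates the checkerboard lattice `Dₙ`. For `c ≠ 0` the vector
`M₁ c` is a nonzero vector of `Dₙ`, so `‖M₁ c‖²` is even and positive, and a telescoping bound on
its tail gives `‖M₁ c‖² ≥ 2 + 2c₂c₄` when `c₂c₄ > 0`. As `ᾱ < α`, the last two terms are therefore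
at least `2αᾱ`, so `‖v‖² ≤ 2` forces `‖c‖² ≤ 1` (because `αᾱ < 1`), i.e. `c = ±eᵢ`.
-/

open Finset

theorem abs_le_sum_range_sq_sub {m k : ℕ} {t : ℕ → ℤ} (ht : t m = 0) (hk : k ≤ m) :
    |t k| ≤ ∑ i ∈ range m, (t (i + 1) - t i) ^ 2 :=
  calc |t k| = |∑ i ∈ Ico k m, (t (i + 1) - t i)| := by
        rw [sum_Ico_sub _ hk, ht, zero_sub, abs_neg]
    _ ≤ ∑ i ∈ Ico k m, |t (i + 1) - t i| := abs_sum_le_sum_abs _ _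
    _ ≤ ∑ i ∈ Ico k m, (t (i + 1) - t i) ^ 2 :=
        sum_le_sum fun _ _ => (Int.abs_eq_natAbs _).trans_le (Int.natAbs_le_self_sq _)
    _ ≤ ∑ i ∈ range m, (t (i + 1) - t i) ^ 2 :=
        sum_le_sum_of_subset_of_nonneg
          (fun i hi => by simp only [mem_Ico, mem_range] at hi ⊢; omega) fun _ _ _ => sq_nonneg _

theorem eq_zero_and_eq_one_or_eq_neg_one_of_sum_sq_le_one {ι : Type*} [Fintype ι] {c : ι → ℤ}
    (hc : ∑ i, c i ^ 2 ≤ 1) {k : ι} (hk : c k ≠ 0) : (∀ j ≠ k, c j = 0) ∧ (c k = 1 ∨ c k = -1) := by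
  classical
  have hk2 : 0 < c k ^ 2 := by positivity
  have hsplit := add_sum_erase univ (fun j => c j ^ 2) (mem_univ k)
  have hrest_nonneg : 0 ≤ ∑ j ∈ univ.erase k, c j ^ 2 := sum_nonneg fun j _ => sq_nonneg _
  have hk1 : c k ^ 2 ≤ 1 := by linarith
  have hrest : ∑ j ∈ univ.erase k, c j ^ 2 = 0 := le_antisymm (by linarith) hrest_nonneg
  rw [sum_eq_zero_iff_of_nonneg fun j _ => sq_nonneg _] at hrest
  refine ⟨fun j hj => ?_, ?_⟩
  · exact (pow_eq_zero_iff two_ne_zero).mp (hrest j (mem_erase_of_ne_of_mem hj (mem_univ j)))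
  · rw [sq_le_one_iff_abs_le_one, Int.abs_le_one_iff] at hk1
    tauto

namespace DnAlpha

def entry (α ᾱ : ℝ) (i j : ℕ) : ℝ :=
  if j = 0 then (if i = 0 then α else if i = 1 then ᾱ else 0)
  else if j = 1 then (if i = 1 then α else if i = 2 then ᾱ else 0)
  else if j = 2 then (if i = 0 then ᾱ else if i = 2 then α else 0)
  else (if i = j then -α else if i + 1 = j then ᾱ else 0)

theorem _root_.DnAlphaMatrix_apply (n : ℕ) (α ᾱ : ℝ) (i j : Fin n) :
    DnAlphaMatrix n α ᾱ i j = entry α ᾱ i j := rfl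

variable {R : Type*} [CommRing R]

/-- Coordinates are `0`-indexed and vectors are sequences `d : ℕ → R` with `d n = 0`, so that
`coord α ᾱ d r = (M_{Dₙ^α} d)_r` holds also for the last row `r = n - 1`. -/
def coord (α ᾱ : R) (d : ℕ → R) : ℕ → R
  | 0 => α * d 0 + ᾱ * d 2
  | 1 => ᾱ * d 0 + α * d 1
  | 2 => ᾱ * d 1 + α * d 2 + ᾱ * d 3
  | i + 3 => ᾱ * d (i + 4) - α * d (i + 3)

theorem sum_range_mul_entry {m : ℕ} {α ᾱ : ℝ} {d : ℕ → ℝ} (hd : d (m + 3) = 0) {r : ℕ}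
    (hr : r < m + 3) : ∑ j ∈ range (m + 3), d j * entry α ᾱ r j = coord α ᾱ d r := by
  rcases r with _ | _ | _ | i
  · simp [sum_range_succ', entry, coord, mul_comm, add_comm]
  · simp [sum_range_succ', entry, coord, mul_comm, add_comm]
  · rcases m with _ | m
    · simp [sum_range_succ', entry, coord, hd, mul_comm, add_comm, add_left_comm]
    · simp [sum_range_succ', entry, coord, mul_comm, add_comm, add_assoc]
  · -- add the vanishing term `j = m + 3`, so that both nonzero entries `j = i + 3, i + 4` occur
    rw [← add_zero (∑ j ∈ _, _), ← zero_mul (entry α ᾱ (i + 3) (m + 3)), ← hd, ← sum_range_succ,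
      sum_eq_add_of_mem (i + 3) (i + 4) (mem_range.2 (by omega)) (mem_range.2 (by omega)) (by simp)]
    · simp [entry, coord, neg_add_eq_sub, mul_comm]
    · intro c _ h; simp only [entry]; split_ifs <;> first | (exfalso; omega) | simp

theorem sum_range_entry_sq {m k : ℕ} (α ᾱ : ℝ) (hk : k < m + 3) :
    ∑ r ∈ range (m + 3), entry α ᾱ r k ^ 2 = α ^ 2 + ᾱ ^ 2 := by
  rcases k with _ | _ | _ | k
  · rw [sum_eq_add_of_mem 0 1 (by simp) (by simp) (by simp)]
    · simp [entry]
    · intro c _ h; simp [entry, h]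
  · rw [sum_eq_add_of_mem 1 2 (by simp) (by simp) (by simp)]
    · simp [entry]
    · intro c _ h; simp [entry, h]
  · rw [sum_eq_add_of_mem 2 0 (by simp) (by simp) (by simp)]
    · simp [entry]
    · intro c _ h; simp [entry, h]
  · rw [sum_eq_add_of_mem (k + 3) (k + 2) (mem_range.2 (by omega)) (mem_range.2 (by omega))
      (by simp)]
    · simp [entry]
    · intro c _ h; simp [entry, h]

theorem sum_range_sq_coord {α ᾱ : R} (h : α ^ 2 + ᾱ ^ 2 = 2) {m : ℕ} {d : ℕ → R}
    (hd : d (m + 3) = 0) :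
    ∑ r ∈ range (m + 3), coord α ᾱ d r ^ 2 =
      (2 - 2 * (α * ᾱ)) * ∑ r ∈ range (m + 3), d r ^ 2
        + α * ᾱ * ∑ r ∈ range (m + 3), coord 1 1 d r ^ 2 + 2 * ᾱ * (ᾱ - α) * (d 1 * d 3) := by
  have tail (i : ℕ) : coord α ᾱ d (i + 3) ^ 2 = (2 - 2 * (α * ᾱ)) * d (i + 3) ^ 2
      + α * ᾱ * coord 1 1 d (i + 3) ^ 2 + (ᾱ ^ 2 - α * ᾱ) * (d (i + 4) ^ 2 - d (i + 3) ^ 2) := by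
    simp only [coord]
    linear_combination d (i + 3) ^ 2 * h
  have telescope : ∑ i ∈ range m, (d (i + 4) ^ 2 - d (i + 3) ^ 2) = -d 3 ^ 2 := by
    rw [sum_range_sub (fun i => d (i + 3) ^ 2), hd]
    ring
  simp only [sum_range_succ', tail, sum_add_distrib, ← mul_sum, telescope]
  simp only [coord]
  linear_combination (d 0 ^ 2 + d 1 ^ 2 + d 2 ^ 2) * h

theorem intCast_coord (α ᾱ : ℤ) (c : ℕ → ℤ) (r : ℕ) :
    ((coord α ᾱ c r : ℤ) : R) = coord (α : R) ᾱ (fun j => (c j : R)) r := by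
  rcases r with _ | _ | _ | i <;> simp [coord]

theorem sum_range_coord_one_one {m : ℕ} {d : ℕ → R} (hd : d (m + 3) = 0) :
    ∑ r ∈ range (m + 3), coord 1 1 d r = 2 * (d 0 + d 1 + d 2) := by
  simp only [sum_range_succ', coord, one_mul, sum_range_sub (fun i => d (i + 3)), hd]
  ring

theorem even_sum_range_sq_coord_one_one {m : ℕ} {c : ℕ → ℤ} (hc : c (m + 3) = 0) :
    Even (∑ r ∈ range (m + 3), coord 1 1 c r ^ 2) := by
  have h : ∑ r ∈ range (m + 3), coord 1 1 c r ^ 2 =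
      ∑ r ∈ range (m + 3), coord 1 1 c r * (coord 1 1 c r - 1) + 2 * (c 0 + c 1 + c 2) := by
    rw [← sum_range_coord_one_one hc, ← sum_add_distrib]
    exact sum_congr rfl fun r _ => by ring
  rw [h]
  exact (even_sum _ fun r _ => Int.even_mul_pred_self _).add (even_two_mul _)

theorem head_add_abs_pos {a b e g : ℤ} (h : a ≠ 0 ∨ b ≠ 0 ∨ e ≠ 0 ∨ g ≠ 0) :
    0 < (a + e) ^ 2 + (a + b) ^ 2 + (b + e + g) ^ 2 + |g| := by
  by_contra! H
  have hzero : (a + e) ^ 2 = 0 ∧ (a + b) ^ 2 = 0 ∧ (b + e + g) ^ 2 = 0 ∧ |g| = 0 := by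
    refine ⟨?_, ?_, ?_, ?_⟩ <;>
      linarith [sq_nonneg (a + e), sq_nonneg (a + b), sq_nonneg (b + e + g), abs_nonneg g]
  simp only [sq_eq_zero_iff, abs_eq_zero] at hzero
  omega

theorem two_add_two_mul_le_head_add_abs {a b e g : ℤ} (h : 0 < b * g) :
    2 + 2 * (b * g) ≤ (a + e) ^ 2 + (a + b) ^ 2 + (b + e + g) ^ 2 + |g| := by
  rcases pos_and_pos_or_neg_and_neg_of_mul_pos h with ⟨hb, hg⟩ | ⟨hb, hg⟩
  · rw [abs_of_pos hg]
    nlinarith [sq_nonneg (2 * a + b + e), sq_nonneg (a + b + 2 * e + g), sq_nonneg (a - e - g),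
      sq_nonneg (b - g), sq_nonneg (b - 1)]
  · rw [abs_of_neg hg]
    nlinarith [sq_nonneg (2 * a + b + e), sq_nonneg (a + b + 2 * e + g), sq_nonneg (a - e - g),
      sq_nonneg (b - g), sq_nonneg (b + 1)]

theorem le_sum_range_sq_coord_one_one {m k : ℕ} {c : ℕ → ℤ} (hc : c (m + 3) = 0) (hk : k ≤ m) :
    (c 0 + c 2) ^ 2 + (c 0 + c 1) ^ 2 + (c 1 + c 2 + c 3) ^ 2 + |c (k + 3)|
      ≤ ∑ r ∈ range (m + 3), coord 1 1 c r ^ 2 := by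
  simp only [sum_range_succ', coord, one_mul]
  linarith [abs_le_sum_range_sq_sub (t := fun i => c (i + 3)) hc hk]

theorem two_le_sum_range_sq_coord_one_one {m r : ℕ} {c : ℕ → ℤ} (hc : c (m + 3) = 0)
    (hr : r < m + 3) (hcr : c r ≠ 0) : 2 ≤ ∑ r ∈ range (m + 3), coord 1 1 c r ^ 2 := by
  have hpos : 0 < ∑ r ∈ range (m + 3), coord 1 1 c r ^ 2 := by
    rcases lt_or_ge r 3 with hr3 | hr3
    · refine (head_add_abs_pos ?_).trans_le (le_sum_range_sq_coord_one_one hc (Nat.zero_le m))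
      interval_cases r <;> tauto
    · obtain ⟨k, rfl⟩ := Nat.exists_eq_add_of_le' hr3
      refine lt_of_lt_of_le ?_ (le_sum_range_sq_coord_one_one hc (k := k) (by omega))
      have := abs_pos.mpr hcr
      positivity
  obtain ⟨t, ht⟩ := even_sum_range_sq_coord_one_one hc
  omega

theorem two_add_two_mul_le_sum_range_sq_coord_one_one {m : ℕ} {c : ℕ → ℤ} (hc : c (m + 3) = 0)
    (h : 0 < c 1 * c 3) : 2 + 2 * (c 1 * c 3) ≤ ∑ r ∈ range (m + 3), coord 1 1 c r ^ 2 :=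
  (two_add_two_mul_le_head_add_abs h).trans (le_sum_range_sq_coord_one_one hc (Nat.zero_le m))

theorem two_mul_le_of_two_le {α ᾱ Y P : ℝ} (h0 : 0 < ᾱ) (hlt : ᾱ < α) (hY : 2 ≤ Y)
    (hYP : 0 < P → 2 + 2 * P ≤ Y) : 2 * (α * ᾱ) ≤ α * ᾱ * Y + 2 * ᾱ * (ᾱ - α) * P := by
  have hαᾱ : 0 < α * ᾱ := mul_pos (h0.trans hlt) h0
  rcases le_or_gt P 0 with hP | hP
  · nlinarith [mul_nonneg (mul_nonneg h0.le (sub_nonneg.2 hlt.le)) (neg_nonneg.2 hP)]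
  · nlinarith [hYP hP, mul_pos (mul_pos h0 h0) hP]

theorem sum_range_sq_le_one_of_sum_sq_coord_le_two {m r : ℕ} {α ᾱ : ℝ} (h2 : α ^ 2 + ᾱ ^ 2 = 2)
    (h0 : 0 < ᾱ) (hlt : ᾱ < α) {c : ℕ → ℤ} (hc : c (m + 3) = 0) (hr : r < m + 3) (hcr : c r ≠ 0)
    (hle : ∑ r ∈ range (m + 3), coord α ᾱ (fun j => (c j : ℝ)) r ^ 2 ≤ 2) :
    ∑ r ∈ range (m + 3), c r ^ 2 ≤ 1 := by
  rw [sum_range_sq_coord h2 (by simp [hc])] at hle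
  have hY := two_mul_le_of_two_le h0 hlt (P := c 1 * c 3)
    (Y := ((∑ r ∈ range (m + 3), coord 1 1 c r ^ 2 : ℤ) : ℝ))
    (by exact_mod_cast two_le_sum_range_sq_coord_one_one hc hr hcr)
    fun hP => by
      exact_mod_cast two_add_two_mul_le_sum_range_sq_coord_one_one hc (by exact_mod_cast hP)
  push_cast [intCast_coord] at hY
  have hαᾱ : α * ᾱ < 1 := by nlinarith [pow_pos (sub_pos.2 hlt) 2]
  have : ((∑ r ∈ range (m + 3), c r ^ 2 : ℤ) : ℝ) ≤ 1 := by
    push_cast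
    nlinarith
  exact_mod_cast this

section Columns

variable {m : ℕ} {α ᾱ : ℝ} {b : Fin (m + 3) → EuclideanSpace ℝ (Fin (m + 3))}

theorem norm_sq_eq_sq_add_sq (hb : ∀ i row, b i row = DnAlphaMatrix (m + 3) α ᾱ row i)
    (i : Fin (m + 3)) : ‖b i‖ ^ 2 = α ^ 2 + ᾱ ^ 2 := by
  rw [EuclideanSpace.real_norm_sq_eq, ← sum_range_entry_sq α ᾱ i.isLt,
    ← Fin.sum_univ_eq_sum_range (fun r => entry α ᾱ r i ^ 2)]
  simp [hb, DnAlphaMatrix_apply]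

theorem norm_sq_sum_smul (hb : ∀ i row, b i row = DnAlphaMatrix (m + 3) α ᾱ row i) {d : ℕ → ℝ}
    (hd : d (m + 3) = 0) :
    ‖∑ j : Fin (m + 3), d j • b j‖ ^ 2 = ∑ r ∈ range (m + 3), coord α ᾱ d r ^ 2 := by
  have hcoord (r : Fin (m + 3)) : (∑ j : Fin (m + 3), d j • b j) r = coord α ᾱ d r := by
    rw [← sum_range_mul_entry hd r.isLt, ← Fin.sum_univ_eq_sum_range (fun j => d j * entry α ᾱ r j)]
    simp [hb, DnAlphaMatrix_apply]
  rw [EuclideanSpace.real_norm_sq_eq, ← Fin.sum_univ_eq_sum_range (fun r => coord α ᾱ d r ^ 2)]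
  simp only [hcoord]

end Columns

end DnAlpha

theorem stmt_15 (n : ℕ) (hn : 3 ≤ n) (α ᾱ : ℝ)
    (hα : 1 < α) (hα' : α < Real.sqrt 2) (hᾱ : ᾱ = Real.sqrt (2 - α ^ 2))
    (b : Fin n → EuclideanSpace ℝ (Fin n))
    (hb : ∀ i row, b i row = DnAlphaMatrix n α ᾱ row i) :
    (∀ i, ‖b i‖ ^ 2 = 2) ∧
      ∀ c : Fin n → ℤ, (∃ i, c i ≠ 0) →
        ‖∑ j, (c j : ℝ) • b j‖ ^ 2 ≤ 2 →
        ∃ i, (∑ j, (c j : ℝ) • b j) = b i ∨ (∑ j, (c j : ℝ) • b j) = -b i := by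
  obtain ⟨m, rfl⟩ := Nat.exists_eq_add_of_le' hn
  have hα2 : α ^ 2 < 2 := by nlinarith [Real.sq_sqrt (zero_le_two (α := ℝ)), Real.sqrt_nonneg 2]
  have h2 : α ^ 2 + ᾱ ^ 2 = 2 := by rw [hᾱ, Real.sq_sqrt (by linarith)]; ring
  have h0 : 0 < ᾱ := hᾱ ▸ Real.sqrt_pos.mpr (by linarith)
  have hlt : ᾱ < α := by nlinarith
  refine ⟨fun i => h2 ▸ DnAlpha.norm_sq_eq_sq_add_sq hb i, fun c ⟨k, hk⟩ hle => ?_⟩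
  set e : ℕ → ℤ := Function.extend Fin.val c 0
  have he (j : Fin (m + 3)) : e j = c j := Fin.val_injective.extend_apply c 0 j
  have hen : e (m + 3) = 0 := Function.extend_apply' _ _ _ fun ⟨j, hj⟩ => j.isLt.ne hj
  have hsum : ∑ j, (c j : ℝ) • b j = ∑ j : Fin (m + 3), ((e j : ℤ) : ℝ) • b j := by simp only [he]
  rw [hsum, DnAlpha.norm_sq_sum_smul hb (d := fun j => (e j : ℝ)) (by simp [hen])] at hle
  have hC := DnAlpha.sum_range_sq_le_one_of_sum_sq_coord_le_two h2 h0 hlt hen k.isLt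
    ((he k).symm ▸ hk) hle
  rw [← Fin.sum_univ_eq_sum_range (fun j => e j ^ 2)] at hC
  simp only [he] at hC
  obtain ⟨hzero, hunit⟩ := eq_zero_and_eq_one_or_eq_neg_one_of_sum_sq_le_one hC hk
  refine ⟨k, ?_⟩
  rw [sum_eq_single k (fun j _ hj => by simp [hzero j hj]) (by simp)]
  rcases hunit with h | h <;> simp [h]
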